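/- A graph G with maximum degree Δ has a proper edge coloring with Δ + 1 colors; equivalently, the edge set of G can be partitioned into at most Δ + 1 matchings. -/

import Mathlib

/-!
Edges are coloured one at a time; as `k > Δ`, every vertex misses some colour. To colour a new
edge `x y`, take a maximal fan `y = y₀, y₁, …, y_m` at `x` (the colour of `x yᵢ₊₁` is missing at
`yᵢ`) and a colour `β` missing at `y_m`. If `β` is also missing at `x`, rotate the fan: give each
`x yᵢ` the colour of `x yᵢ₊₁` and colour `x y_m` with `β`. Otherwise, by maximality, `β` is the
colour of some `x y_j`, so `β` is missing at `y_{j-1}`. Let `α` be missing at `x`. The `α/β`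
Kempe chain through `x` is a path with `x` as an end, so it cannot end at both `y_{j-1}` and `y_m`.
Swapping `α` and `β` on it frees `β` at `x`, and then either the fan `y₀, …, y_{j-1}` or the whole
fan can be rotated with `β`.
-/

open Finset

variable {V : Type*}

/-- A matching of a simple graph `G`: a finite set of edges of `G` such that
no two distinct edges share a vertex. -/
def IsMatching (G : SimpleGraph V) (M : Finset (Sym2 V)) : Prop :=
  (∀ e ∈ M, e ∈ G.edgeSet) ∧
  ∀ e ∈ M, ∀ f ∈ M, e ≠ f → ∀ v, v ∈ e → v ∉ f

/-- A `k`-disjoint matching: `k` pairwise edge-disjoint matchings of `G`. -/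
def IsKDisjointMatching (G : SimpleGraph V) (k : ℕ)
    (Ms : Fin k → Finset (Sym2 V)) : Prop :=
  (∀ i, IsMatching G (Ms i)) ∧ Pairwise fun i j => Disjoint (Ms i) (Ms j)

/-- The weight of a set of edges. -/
def mweight (w : Sym2 V → ℕ) (M : Finset (Sym2 V)) : ℕ := ∑ e ∈ M, w e

/-- A proper edge coloring with `k` colors of the edge set `F`:
edges sharing a vertex receive distinct colors. -/
def ProperColoringOn (k : ℕ) (F : Finset (Sym2 V)) (c : Sym2 V → Fin k) : Prop :=
  ∀ e ∈ F, ∀ f ∈ F, e ≠ f → (∃ x, x ∈ e ∧ x ∈ f) → c e ≠ c f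

variable {k : ℕ}

def MissingAt (c : Sym2 V → Fin k) (F : Finset (Sym2 V)) (v : V) (a : Fin k) : Prop :=
  ∀ e ∈ F, v ∈ e → c e ≠ a

namespace ProperColoringOn

variable {c : Sym2 V → Fin k} {F F' : Finset (Sym2 V)}

theorem mono (hc : ProperColoringOn k F c) (h : F' ⊆ F) : ProperColoringOn k F' c :=
  fun e he f hf => hc e (h he) f (h hf)

theorem eq_of_mem_of_color_eq (hc : ProperColoringOn k F c) {v : V} {e f : Sym2 V}
    (he : e ∈ F) (hf : f ∈ F) (hve : v ∈ e) (hvf : v ∈ f) (hcol : c e = c f) : e = f := by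
  by_contra hne
  exact hc e he f hf hne ⟨v, hve, hvf⟩ hcol

theorem eq_of_color_mk_eq (hc : ProperColoringOn k F c) {x a b : V} (ha : s(x, a) ∈ F)
    (hb : s(x, b) ∈ F) (hcol : c s(x, a) = c s(x, b)) : a = b :=
  Sym2.congr_right.1 <|
    hc.eq_of_mem_of_color_eq ha hb (Sym2.mem_mk_left _ _) (Sym2.mem_mk_left _ _) hcol

variable [DecidableEq V]

theorem missingAt_erase (hc : ProperColoringOn k F c) {v : V} {f : Sym2 V} (hf : f ∈ F)
    (hv : v ∈ f) : MissingAt c (F.erase f) v (c f) := fun _ he hve hcol =>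
  (mem_erase.1 he).1 (hc.eq_of_mem_of_color_eq (mem_of_mem_erase he) hf hve hv hcol)

theorem update (hc : ProperColoringOn k F c) {x y : V} {a : Fin k}
    (hx : MissingAt c F x a) (hy : MissingAt c F y a) :
    ProperColoringOn k (insert s(x, y) F) (Function.update c s(x, y) a) := by
  have key : ∀ f ∈ insert s(x, y) F, f ≠ s(x, y) → (∃ w, w ∈ s(x, y) ∧ w ∈ f) →
      Function.update c s(x, y) a f ≠ a := by
    rintro f hf hne ⟨w, hw, hwf⟩
    rw [Function.update_of_ne hne]
    rcases Sym2.mem_iff.1 hw with rfl | rfl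
    exacts [hx f ((mem_insert.1 hf).resolve_left hne) hwf,
      hy f ((mem_insert.1 hf).resolve_left hne) hwf]
  intro e he f hf hne hshare
  by_cases hex : e = s(x, y)
  · subst hex
    rw [Function.update_self]
    exact (key f hf (Ne.symm hne) hshare).symm
  by_cases hfx : f = s(x, y)
  · subst hfx
    rw [Function.update_self]
    exact key e he hex (hshare.imp fun _ => And.symm)
  rw [Function.update_of_ne hex, Function.update_of_ne hfx]
  exact hc e ((mem_insert.1 he).resolve_left hex) f ((mem_insert.1 hf).resolve_left hfx) hne hshare

end ProperColoringOn

theorem MissingAt.update [DecidableEq V] {c : Sym2 V → Fin k} {F F' : Finset (Sym2 V)} {v : V}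
    {a b : Fin k} {e : Sym2 V} (h : MissingAt c F v a) (hF' : F' ⊆ F) (hab : b ≠ a) :
    MissingAt (Function.update c e b) (insert e F') v a := by
  intro f hf hvf
  by_cases hfe : f = e
  · rw [hfe, Function.update_self]; exact hab
  · rw [Function.update_of_ne hfe]
    exact h f (hF' ((mem_insert.1 hf).resolve_left hfe)) hvf

/-- A fan at `x` for the edge `x y₀` is a duplicate-free list `y₀, y₁, …` with
`List.IsChain (FanStep c F x)`: each `x yᵢ₊₁` lies in `F` and its colour is missing at `yᵢ`. -/
def FanStep (c : Sym2 V → Fin k) (F : Finset (Sym2 V)) (x a b : V) : Prop :=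
  s(x, b) ∈ F ∧ MissingAt c F a (c s(x, b))

theorem mem_of_isChain_fanStep {c : Sym2 V → Fin k} {F : Finset (Sym2 V)} {x a : V} :
    ∀ {l : List V}, (a :: l).IsChain (FanStep c F x) → ∀ b ∈ l, s(x, b) ∈ F
  | [], _, _, hb => absurd hb List.not_mem_nil
  | _ :: _, h, b, hb => by
    obtain ⟨hs, h'⟩ := List.isChain_cons_cons.1 h
    rcases List.mem_cons.1 hb with rfl | hb
    exacts [hs.1, mem_of_isChain_fanStep h' b hb]

theorem exists_properColoringOn_insert_of_fan [DecidableEq V] {x : V} {β : Fin k} :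
    ∀ {y : V} {t : List V} {c : Sym2 V → Fin k} {F : Finset (Sym2 V)},
      ProperColoringOn k F c → (y :: t).IsChain (FanStep c F x) → (y :: t).Nodup →
      MissingAt c F x β → MissingAt c F ((y :: t).getLast (List.cons_ne_nil y t)) β →
      ∃ c', ProperColoringOn k (insert s(x, y) F) c'
  | _, [], _, _, hc, _, _, hx, hy => ⟨_, hc.update hx hy⟩
  | y, y₁ :: t, c, F, hc, hfan, hnd, hx, hlast => by
    obtain ⟨⟨hy₁, hγy⟩, hfan₁⟩ := List.isChain_cons_cons.1 hfan
    obtain ⟨hy, hnd₁⟩ := List.nodup_cons.1 hnd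
    have hF' : F.erase s(x, y₁) ⊆ F := erase_subset _ _
    have hγ : ∀ b ∈ t, c s(x, y₁) ≠ c s(x, b) := fun b hb hcol =>
      (List.nodup_cons.1 hnd₁).1 <|
        hc.eq_of_color_mk_eq hy₁ (mem_of_isChain_fanStep hfan₁ b hb) hcol ▸ hb
    have hγβ : c s(x, y₁) ≠ β := hx _ hy₁ (Sym2.mem_mk_left _ _)
    -- Move the colour of `x y₁` to `x y`; then `y₁ :: t` is a fan for the uncoloured edge `x y₁`.
    have hfan' : (y₁ :: t).IsChain (FanStep (Function.update c s(x, y) (c s(x, y₁)))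
        (insert s(x, y) (F.erase s(x, y₁))) x) := by
      refine hfan₁.imp_of_mem_tail_imp fun a b _ hb ⟨hbF, hmiss⟩ => ?_
      have hby₁ : b ≠ y₁ := fun h => (List.nodup_cons.1 hnd₁).1 (h ▸ hb)
      have hby : b ≠ y := fun h => hy (h ▸ List.mem_cons_of_mem _ hb)
      rw [FanStep, Function.update_of_ne (mt Sym2.congr_right.1 hby)]
      exact ⟨mem_insert_of_mem (mem_erase.2 ⟨mt Sym2.congr_right.1 hby₁, hbF⟩),
        hmiss.update hF' (hγ b hb)⟩
    have hc' := (hc.mono hF').update (hc.missingAt_erase hy₁ (Sym2.mem_mk_left _ _))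
      fun e he => hγy e (mem_of_mem_erase he)
    obtain ⟨c', hc''⟩ := exists_properColoringOn_insert_of_fan hc' hfan' hnd₁
      (hx.update hF' hγβ) ((List.getLast_cons_cons ▸ hlast).update hF' hγβ)
    rw [insert_comm, insert_erase hy₁] at hc''
    exact ⟨c', hc''⟩

theorem length_le_card_of_isChain_fanStep [DecidableEq V] {c : Sym2 V → Fin k}
    {F : Finset (Sym2 V)} {x a : V} {l : List V} (h : (a :: l).IsChain (FanStep c F x))
    (hnd : l.Nodup) : l.length ≤ #F :=
  calc l.length = #(l.map (s(x, ·))).toFinset := by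
        rw [List.toFinset_card_of_nodup (hnd.map fun _ _ => Sym2.congr_right.1), List.length_map]
    _ ≤ #F := card_le_card fun e he => by
        obtain ⟨b, hb, rfl⟩ := List.mem_map.1 (List.mem_toFinset.1 he)
        exact mem_of_isChain_fanStep h b hb

theorem exists_maximal_fan [DecidableEq V] (c : Sym2 V → Fin k) (F : Finset (Sym2 V)) (x y : V) :
    ∃ t : List V, (y :: t).IsChain (FanStep c F x) ∧ (y :: t).Nodup ∧
      ∀ z, FanStep c F x ((y :: t).getLast (List.cons_ne_nil y t)) z → z ∈ y :: t := by
  by_contra! hext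
  have hlong : ∀ n, ∃ t : List V, (y :: t).IsChain (FanStep c F x) ∧ (y :: t).Nodup ∧
      t.length = n := by
    intro n
    induction n with
    | zero => exact ⟨[], .singleton y, List.nodup_singleton y, rfl⟩
    | succ n ih =>
      obtain ⟨t, hfan, hnd, rfl⟩ := ih
      obtain ⟨z, hz, hzt⟩ := hext t hfan hnd
      refine ⟨t ++ [z], ?_, ?_, by simp⟩
      · rw [← List.cons_append]
        exact hfan.append (.singleton z) (by simpa [List.getLast?_eq_some_getLast] using hz)
      · rw [← List.cons_append, ← List.concat_eq_append]
        exact hnd.concat hzt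
  obtain ⟨t, hfan, hnd, hlen⟩ := hlong (#F + 1)
  have := length_le_card_of_isChain_fanStep hfan hnd.of_cons
  omega

def Reach (S : Finset (Sym2 V)) : V → V → Prop :=
  Relation.ReflTransGen fun a b => s(a, b) ∈ S

namespace Reach

variable {S : Finset (Sym2 V)} {x w : V}

theorem of_mem {u : V} {e : Sym2 V} (h : Reach S x u) (he : e ∈ S) (hu : u ∈ e) (hw : w ∈ e) :
    Reach S x w := by
  obtain ⟨u', rfl⟩ := Sym2.mem_iff_exists.1 hu
  rcases Sym2.mem_iff.1 hw with rfl | rfl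
  exacts [h, h.tail he]

theorem eq_of_forall_notMem (hx : ∀ e ∈ S, x ∉ e) (h : Reach S x w) : w = x := by
  rcases h.cases_head with h | ⟨b, hb, -⟩
  exacts [h.symm, absurd (Sym2.mem_mk_left x b) (hx _ hb)]

theorem eq_or_reach_erase [DecidableEq V] {x' : V} (hx : ∀ e ∈ S, x ∈ e → e = s(x, x'))
    (h : Reach S x w) : w = x ∨ Reach (S.erase s(x, x')) x' w := by
  induction h with
  | refl => exact Or.inl rfl
  | @tail b w _ hbw ih =>
    by_cases he : s(b, w) = s(x, x')
    · rcases Sym2.eq_iff.1 he with ⟨-, rfl⟩ | ⟨-, rfl⟩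
      exacts [Or.inr .refl, Or.inl rfl]
    · rcases ih with rfl | ih
      · exact absurd (hx _ hbw (Sym2.mem_mk_left _ _)) he
      · exact Or.inr (ih.tail (mem_erase.2 ⟨he, hbw⟩))

end Reach

-- In maximum degree 2, the part reachable from `x` is a path with end `x`: peel off its first edge.
theorem eq_of_reach_of_card_filter_le [DecidableEq V] (S : Finset (Sym2 V)) {x u v : V}
    (hdeg : ∀ w, #(S.filter (w ∈ ·)) ≤ 2) (hx : #(S.filter (x ∈ ·)) ≤ 1)
    (hu : #(S.filter (u ∈ ·)) ≤ 1) (hv : #(S.filter (v ∈ ·)) ≤ 1)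
    (hux : u ≠ x) (hvx : v ≠ x) (hru : Reach S x u) (hrv : Reach S x v) : u = v := by
  induction S using Finset.strongInduction generalizing x with
  | H S ih =>
  obtain ⟨x', hxx'⟩ : ∃ x', s(x, x') ∈ S := by
    rcases hru.cases_head with h | ⟨b, hb, -⟩
    exacts [absurd h.symm hux, ⟨b, hb⟩]
  have huniq : ∀ e ∈ S, x ∈ e → e = s(x, x') := fun e he hxe =>
    card_le_one.1 hx e (mem_filter.2 ⟨he, hxe⟩) _ (mem_filter.2 ⟨hxx', Sym2.mem_mk_left _ _⟩)
  have hsub : ∀ w, (S.erase s(x, x')).filter (w ∈ ·) ⊆ S.filter (w ∈ ·) := fun w =>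
    filter_subset_filter _ (erase_subset _ _)
  have hx' : #((S.erase s(x, x')).filter (x' ∈ ·)) + 1 = #(S.filter (x' ∈ ·)) := by
    rw [filter_erase, card_erase_add_one]
    exact mem_filter.2 ⟨hxx', Sym2.mem_mk_right _ _⟩
  have hend : #(S.filter (x' ∈ ·)) ≤ 1 → ∀ w, Reach (S.erase s(x, x')) x' w → w = x' :=
    fun h w hw => hw.eq_of_forall_notMem fun e he hx'e => by
      have : 0 < #((S.erase s(x, x')).filter (x' ∈ ·)) := card_pos.2 ⟨e, mem_filter.2 ⟨he, hx'e⟩⟩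
      omega
  obtain hu' | hru' := hru.eq_or_reach_erase huniq
  · exact absurd hu' hux
  obtain hv' | hrv' := hrv.eq_or_reach_erase huniq
  · exact absurd hv' hvx
  by_cases hux' : u = x'
  · exact hux'.trans (hend (hux' ▸ hu) v hrv').symm
  by_cases hvx' : v = x'
  · exact (hend (hvx' ▸ hv) u hru').trans hvx'.symm
  exact ih _ (erase_ssubset hxx') (fun w => (card_le_card (hsub w)).trans (hdeg w))
    (by have := hdeg x'; omega) ((card_le_card (hsub u)).trans hu)
    ((card_le_card (hsub v)).trans hv) hux' hvx' hru' hrv'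

section Kempe

variable {c : Sym2 V → Fin k} {F : Finset (Sym2 V)} {α β γ : Fin k} {x v : V} {e : Sym2 V}

def kempeEdges (c : Sym2 V → Fin k) (α β : Fin k) (F : Finset (Sym2 V)) : Finset (Sym2 V) :=
  F.filter fun e => c e = α ∨ c e = β

def InKempeChain (c : Sym2 V → Fin k) (α β : Fin k) (F : Finset (Sym2 V)) (x : V)
    (e : Sym2 V) : Prop :=
  e ∈ kempeEdges c α β F ∧ ∃ u ∈ e, Reach (kempeEdges c α β F) x u

open Classical in
noncomputable def kempeSwap (c : Sym2 V → Fin k) (α β : Fin k) (F : Finset (Sym2 V)) (x : V) :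
    Sym2 V → Fin k :=
  fun e => if InKempeChain c α β F x e then Equiv.swap α β (c e) else c e

theorem mem_kempeEdges : e ∈ kempeEdges c α β F ↔ e ∈ F ∧ (c e = α ∨ c e = β) := mem_filter

theorem InKempeChain.reach (h : InKempeChain c α β F x e) (hv : v ∈ e) :
    Reach (kempeEdges c α β F) x v := by
  obtain ⟨he, u, hu, hr⟩ := h
  exact hr.of_mem he hu hv

theorem kempeSwap_of_not (h : ¬ InKempeChain c α β F x e) : kempeSwap c α β F x e = c e :=
  if_neg h

theorem kempeSwap_of_inKempeChain (h : InKempeChain c α β F x e) :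
    kempeSwap c α β F x e = Equiv.swap α β (c e) :=
  if_pos h

theorem kempeSwap_eq_iff_of_ne (hα : γ ≠ α) (hβ : γ ≠ β) :
    kempeSwap c α β F x e = γ ↔ c e = γ := by
  unfold kempeSwap
  split_ifs
  · rw [Equiv.swap_apply_eq_iff, Equiv.swap_apply_of_ne_of_ne hα hβ]
  · rfl

theorem missingAt_kempeSwap_iff_of_ne (hα : γ ≠ α) (hβ : γ ≠ β) :
    MissingAt (kempeSwap c α β F x) F v γ ↔ MissingAt c F v γ := by
  simp only [MissingAt, ne_eq, kempeSwap_eq_iff_of_ne hα hβ]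

theorem missingAt_kempeSwap_iff_of_not_reach (hv : ¬ Reach (kempeEdges c α β F) x v) :
    MissingAt (kempeSwap c α β F x) F v γ ↔ MissingAt c F v γ := by
  have hfix : ∀ e, v ∈ e → kempeSwap c α β F x e = c e := fun _ hve =>
    kempeSwap_of_not fun h => hv (h.reach hve)
  exact forall₂_congr fun e _ => imp_congr_right fun hve => by rw [hfix e hve]

theorem MissingAt.kempeSwap_of_reach (h : MissingAt c F v γ) (hγ : γ = α ∨ γ = β)
    (hv : Reach (kempeEdges c α β F) x v) :
    MissingAt (kempeSwap c α β F x) F v (Equiv.swap α β γ) := by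
  intro e he hve hcol
  by_cases hK : InKempeChain c α β F x e
  · rw [kempeSwap_of_inKempeChain hK, (Equiv.swap α β).injective.eq_iff] at hcol
    exact h e he hve hcol
  · rw [kempeSwap_of_not hK] at hcol
    refine hK ⟨mem_kempeEdges.2 ⟨he, ?_⟩, v, hve, hv⟩
    rcases hγ with rfl | rfl
    · exact Or.inr (hcol.trans (Equiv.swap_apply_left _ _))
    · exact Or.inl (hcol.trans (Equiv.swap_apply_right _ _))

theorem ProperColoringOn.kempeSwap (hc : ProperColoringOn k F c) :
    ProperColoringOn k F (_root_.kempeSwap c α β F x) := by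
  rintro e he f hf hne ⟨w, hwe, hwf⟩
  have hmixed : ∀ {e f}, w ∈ e → f ∈ F → w ∈ f → InKempeChain c α β F x e →
      ¬ InKempeChain c α β F x f →
        _root_.kempeSwap c α β F x e ≠ _root_.kempeSwap c α β F x f := by
    intro e f hwe hf hwf hKe hKf hcol
    have hf' : f ∉ kempeEdges c α β F := fun hK => hKf ⟨hK, w, hwf, hKe.reach hwe⟩
    rw [mem_kempeEdges, not_and, not_or] at hf'
    obtain ⟨hfα, hfβ⟩ := hf' hf
    rw [kempeSwap_of_not hKf, kempeSwap_eq_iff_of_ne hfα hfβ] at hcol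
    rcases (mem_kempeEdges.1 hKe.1).2 with h | h
    exacts [hfα (hcol ▸ h), hfβ (hcol ▸ h)]
  by_cases hKe : InKempeChain c α β F x e <;> by_cases hKf : InKempeChain c α β F x f
  · rw [kempeSwap_of_inKempeChain hKe, kempeSwap_of_inKempeChain hKf]
    exact (Equiv.swap α β).injective.ne (hc e he f hf hne ⟨w, hwe, hwf⟩)
  · exact hmixed hwe hf hwf hKe hKf
  · exact (hmixed hwf he hwe hKf hKe).symm
  · rw [kempeSwap_of_not hKe, kempeSwap_of_not hKf]
    exact hc e he f hf hne ⟨w, hwe, hwf⟩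

theorem FanStep.kempeSwap {y a b : V} (h : FanStep c F y a b) (hα : c s(y, b) ≠ α)
    (hβ : c s(y, b) ≠ β) : FanStep (_root_.kempeSwap c α β F x) F y a b :=
  ⟨h.1, by
    rw [(kempeSwap_eq_iff_of_ne hα hβ).2 rfl, missingAt_kempeSwap_iff_of_ne hα hβ]
    exact h.2⟩

theorem ProperColoringOn.card_filter_le [DecidableEq V] {S : Finset (Sym2 V)}
    (hc : ProperColoringOn k F c) (hS : S ⊆ F) {A : Finset (Fin k)}
    (hA : ∀ e ∈ S, v ∈ e → c e ∈ A) :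
    #(S.filter (v ∈ ·)) ≤ #A := by
  refine card_le_card_of_injOn c (fun e he => ?_) fun e he f hf hcol => ?_
  · exact hA e (mem_filter.1 he).1 (mem_filter.1 he).2
  · rw [mem_coe, mem_filter] at he hf
    exact hc.eq_of_mem_of_color_eq (hS he.1) (hS hf.1) he.2 hf.2 hcol

theorem ProperColoringOn.eq_of_reach_kempeEdges [DecidableEq V] (hc : ProperColoringOn k F c)
    {u w : V} (hx : MissingAt c F x α ∨ MissingAt c F x β)
    (hu : MissingAt c F u α ∨ MissingAt c F u β) (hw : MissingAt c F w α ∨ MissingAt c F w β)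
    (hux : u ≠ x) (hwx : w ≠ x) (hru : Reach (kempeEdges c α β F) x u)
    (hrw : Reach (kempeEdges c α β F) x w) : u = w := by
  have hsub : kempeEdges c α β F ⊆ F := filter_subset _ _
  have hcol : ∀ v, ∀ e ∈ kempeEdges c α β F, v ∈ e → c e = α ∨ c e = β := fun _ e he _ =>
    (mem_kempeEdges.1 he).2
  have hend : ∀ v, MissingAt c F v α ∨ MissingAt c F v β →
      #((kempeEdges c α β F).filter (v ∈ ·)) ≤ 1 := by
    rintro v (hv | hv)
    · refine (hc.card_filter_le hsub (A := {β}) fun e he hve => ?_).trans (card_singleton β).le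
      exact mem_singleton.2 ((hcol v e he hve).resolve_left (hv e (hsub he) hve))
    · refine (hc.card_filter_le hsub (A := {α}) fun e he hve => ?_).trans (card_singleton α).le
      exact mem_singleton.2 ((hcol v e he hve).resolve_right (hv e (hsub he) hve))
  refine eq_of_reach_of_card_filter_le _ (fun v => ?_) (hend x hx) (hend u hu) (hend w hw)
    hux hwx hru hrw
  refine (hc.card_filter_le hsub (A := {α, β}) fun e he hve => ?_).trans card_le_two
  rcases hcol v e he hve with h | h <;> simp [h]

end Kempe

theorem exists_properColoringOn_insert_of_split_fan [DecidableEq V] {c : Sym2 V → Fin k}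
    {F : Finset (Sym2 V)} {α β : Fin k} (hc : ProperColoringOn k F c) {x y z : V}
    {l₁ l₂ : List V} (hfan : (y :: l₁ ++ z :: l₂).IsChain (FanStep c F x))
    (hnd : (y :: l₁ ++ z :: l₂).Nodup) (hα : MissingAt c F x α) (hβz : c s(x, z) = β)
    (hβ : MissingAt c F ((z :: l₂).getLast (List.cons_ne_nil z l₂)) β) :
    ∃ c', ProperColoringOn k (insert s(x, y) F) c' := by
  set w := (y :: l₁).getLast (List.cons_ne_nil y l₁)
  set u := (z :: l₂).getLast (List.cons_ne_nil z l₂)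
  obtain ⟨hfan₁, hfan₂, hjoin⟩ := List.isChain_append.1 hfan
  obtain ⟨hz, hβw⟩ : FanStep c F x w z :=
    hjoin w (by simp [w, List.getLast?_eq_some_getLast]) z rfl
  rw [hβz] at hβw
  obtain ⟨hnd₁, hnd₂, hdisj⟩ := List.nodup_append.1 hnd
  have hxz : s(x, z) ∈ kempeEdges c α β F := mem_kempeEdges.2 ⟨hz, Or.inr hβz⟩
  have hcol : ∀ b, s(x, b) ∈ F → b ≠ z → c s(x, b) ≠ α ∧ c s(x, b) ≠ β := fun b hb hbz =>
    ⟨hα _ hb (Sym2.mem_mk_left _ _), fun h => hbz (hc.eq_of_color_mk_eq hb hz (h.trans hβz.symm))⟩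
  have hswap₁ : (y :: l₁).IsChain (FanStep (kempeSwap c α β F x) F x) :=
    hfan₁.imp_of_mem_tail_imp fun _ b _ hb h =>
      have hbz := hdisj b (List.mem_cons_of_mem y hb) z List.mem_cons_self
      h.kempeSwap (hcol b h.1 hbz).1 (hcol b h.1 hbz).2
  have hswap₂ : (z :: l₂).IsChain (FanStep (kempeSwap c α β F x) F x) :=
    hfan₂.imp_of_mem_tail_imp fun _ b _ hb h =>
      have hbz : b ≠ z := fun hbz => (List.nodup_cons.1 hnd₂).1 (hbz ▸ hb)
      h.kempeSwap (hcol b h.1 hbz).1 (hcol b h.1 hbz).2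
  have hβx : MissingAt (kempeSwap c α β F x) F x β := by
    simpa using hα.kempeSwap_of_reach (Or.inl rfl) .refl
  have hxβ : ∀ v, MissingAt c F v β → v ≠ x := by
    rintro v hv rfl
    exact hv _ hz (Sym2.mem_mk_left _ _) hβz
  by_cases hrw : Reach (kempeEdges c α β F) x w
  · have hru : ¬ Reach (kempeEdges c α β F) x u := fun hru =>
      hdisj w (List.getLast_mem _) u (List.getLast_mem _) <|
        hc.eq_of_reach_kempeEdges (Or.inl hα) (Or.inr hβw) (Or.inr hβ) (hxβ w hβw) (hxβ u hβ)
          hrw hru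
    have hwz : FanStep (kempeSwap c α β F x) F x w z := by
      refine ⟨hz, ?_⟩
      rw [kempeSwap_of_inKempeChain ⟨hxz, x, Sym2.mem_mk_left _ _, .refl⟩, hβz,
        Equiv.swap_apply_right]
      simpa using hβw.kempeSwap_of_reach (Or.inr rfl) hrw
    refine exists_properColoringOn_insert_of_fan (t := l₁ ++ z :: l₂) hc.kempeSwap
      (hswap₁.append hswap₂ ?_) hnd hβx ?_
    · simpa [List.getLast?_eq_some_getLast] using hwz
    · simpa using (missingAt_kempeSwap_iff_of_not_reach hru).2 hβ
  · exact exists_properColoringOn_insert_of_fan hc.kempeSwap hswap₁ hnd₁ hβx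
      ((missingAt_kempeSwap_iff_of_not_reach hrw).2 hβw)

theorem ProperColoringOn.exists_insert [DecidableEq V] {c : Sym2 V → Fin k}
    {F : Finset (Sym2 V)} (hc : ProperColoringOn k F c) (hmiss : ∀ v, ∃ a, MissingAt c F v a)
    (e : Sym2 V) : ∃ c', ProperColoringOn k (insert e F) c' := by
  by_cases he : e ∈ F
  · exact ⟨c, by rwa [insert_eq_of_mem he]⟩
  induction e using Sym2.ind with | _ x y => ?_
  obtain ⟨t, hfan, hnd, hmax⟩ := exists_maximal_fan c F x y
  obtain ⟨β, hβ⟩ := hmiss ((y :: t).getLast (List.cons_ne_nil y t))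
  by_cases hβx : MissingAt c F x β
  · exact exists_properColoringOn_insert_of_fan hc hfan hnd hβx hβ
  obtain ⟨α, hα⟩ := hmiss x
  obtain ⟨e, hxe, hx, hβe⟩ : ∃ e ∈ F, x ∈ e ∧ c e = β := by simpa [MissingAt] using hβx
  obtain ⟨z, rfl⟩ := Sym2.mem_iff_exists.1 hx
  have hzt : z ∈ t := (List.mem_cons.1 (hmax z ⟨hxe, hβe ▸ hβ⟩)).resolve_left <| by
    rintro rfl
    exact he hxe
  obtain ⟨l₁, l₂, rfl⟩ := List.append_of_mem hzt
  exact exists_properColoringOn_insert_of_split_fan hc hfan hnd hα hβe (by simpa using hβ)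

theorem exists_missingAt_of_maxDegree_lt [Fintype V] (G : SimpleGraph V) [DecidableRel G.Adj]
    (hk : G.maxDegree < k) {F : Finset (Sym2 V)} (hF : ∀ e ∈ F, e ∈ G.edgeSet)
    (c : Sym2 V → Fin k) (v : V) : ∃ a, MissingAt c F v a := by
  classical
  by_contra! h
  have hsurj : (univ : Finset (Fin k)) ⊆ (F.filter (v ∈ ·)).image c := fun a _ => by
    obtain ⟨e, he, hve, rfl⟩ : ∃ e ∈ F, v ∈ e ∧ c e = a := by simpa [MissingAt] using h a
    exact mem_image_of_mem c (mem_filter.2 ⟨he, hve⟩)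
  have hdeg : #(F.filter (v ∈ ·)) ≤ G.degree v := by
    rw [← G.card_incidenceFinset_eq_degree]
    exact card_le_card fun e he =>
      (G.mem_incidenceFinset v e).2 ⟨hF e (mem_filter.1 he).1, (mem_filter.1 he).2⟩
  have := card_le_card hsurj
  rw [card_univ, Fintype.card_fin] at this
  have := card_image_le (s := F.filter (v ∈ ·)) (f := c)
  have := G.degree_le_maxDegree v
  omega

theorem exists_properColoringOn_of_maxDegree_lt [Fintype V] [DecidableEq V] (G : SimpleGraph V)
    [DecidableRel G.Adj] (hk : G.maxDegree < k) (F : Finset (Sym2 V))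
    (hF : ∀ e ∈ F, e ∈ G.edgeSet) : ∃ c : Sym2 V → Fin k, ProperColoringOn k F c := by
  induction F using Finset.induction_on with
  | empty => exact ⟨fun _ => ⟨0, by omega⟩, fun e he => absurd he (notMem_empty e)⟩
  | insert e F _ ih =>
    have hF' : ∀ f ∈ F, f ∈ G.edgeSet := fun f hf => hF f (mem_insert_of_mem hf)
    obtain ⟨c, hc⟩ := ih hF'
    exact hc.exists_insert (exists_missingAt_of_maxDegree_lt G hk hF' c) e

theorem ProperColoringOn.isKDisjointMatching {G : SimpleGraph V} {F : Finset (Sym2 V)}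
    {c : Sym2 V → Fin k} (hF : ∀ e ∈ F, e ∈ G.edgeSet) (hc : ProperColoringOn k F c) :
    IsKDisjointMatching G k fun i => F.filter (c · = i) := by
  refine ⟨fun i => ⟨fun e he => hF e (mem_filter.1 he).1, ?_⟩, fun i j hij => ?_⟩
  · intro e he f hf hne v hve hvf
    rw [mem_filter] at he hf
    exact hc e he.1 f hf.1 hne ⟨v, hve, hvf⟩ (he.2.trans hf.2.symm)
  · exact disjoint_filter.2 fun e _ hi hj => hij (hi.symm.trans hj)

/-- Vizing: A graph with maximum degree `Δ` has a proper edge coloring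
with `Δ + 1` colors; equivalently, its edge set partitions into at most `Δ + 1`
matchings. -/
theorem edgeSet_partitions_into_maxDegree_succ_matchings
    [Fintype V] [DecidableEq V] (G : SimpleGraph V) [DecidableRel G.Adj] :
    ∃ Ms : Fin (G.maxDegree + 1) → Finset (Sym2 V),
      IsKDisjointMatching G (G.maxDegree + 1) Ms ∧
      Finset.univ.biUnion Ms = G.edgeFinset := by
  have hE : ∀ e ∈ G.edgeFinset, e ∈ G.edgeSet := fun _ => G.mem_edgeFinset.1
  obtain ⟨c, hc⟩ := exists_properColoringOn_of_maxDegree_lt G (Nat.lt_succ_self _) _ hE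
  exact ⟨_, hc.isKDisjointMatching hE, biUnion_filter_eq_of_maps_to fun _ _ => mem_univ _⟩
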